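/- arXiv:1610.03204 — 6 statements merged into one kernel-verified Lean document; each statement's English description precedes it below -/
import Mathlib

section
/- Let R be a nonnegative integrable real-valued random variable on a probability space with E[R] > 0, let W > 0 and ζ > 0 be real constants, and define Ψ(λ) := E[(W·R − λ)^+]. Then there exists a unique λ* > 0 satisfying Ψ(λ*) = ζ·λ*. Moreover, this λ* satisfies P(W·R > λ*) > 0. -/
open MeasureTheory

/-- For a nonnegative integrable random variable `R` with `E[R] > 0`, `W > 0` and `ζ > 0`,
the fixed point equation `Ψ(λ) = ζ·λ` with `Ψ(λ) := E[(W·R − λ)⁺]` has a unique positive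
solution `λ*`, and any such solution satisfies `P(W·R > λ*) > 0`. -/
theorem fixed_point_exists_unique {Ω : Type*} [MeasurableSpace Ω]
    (P : Measure Ω) [IsProbabilityMeasure P]
    (R : Ω → ℝ) (hmeas : Measurable R) (hint : Integrable R P) (hpos : ∀ ω, 0 ≤ R ω)
    (hER : 0 < ∫ ω, R ω ∂P)
    (W ζ : ℝ) (hW : 0 < W) (hζ : 0 < ζ)
    (Ψ : ℝ → ℝ) (hΨ : ∀ l, Ψ l = ∫ ω, max (W * R ω - l) 0 ∂P) :
    (∃! l : ℝ, 0 < l ∧ Ψ l = ζ * l) ∧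
    (∀ l : ℝ, 0 < l → Ψ l = ζ * l → 0 < P {ω | l < W * R ω}) := by
  have hInt : ∀ l : ℝ, Integrable (fun ω => max (W * R ω - l) 0) P := fun l =>
    ((hint.const_mul W).sub (integrable_const l)).pos_part
  -- Ψ is 1-Lipschitz
  have hLip : LipschitzWith 1 Ψ := by
    apply LipschitzWith.of_dist_le_mul
    intro a b
    rw [hΨ a, hΨ b]
    rw [Real.dist_eq, ← integral_sub (hInt a) (hInt b)]
    calc |∫ ω, (max (W * R ω - a) 0 - max (W * R ω - b) 0) ∂P|
        ≤ ∫ ω, |max (W * R ω - a) 0 - max (W * R ω - b) 0| ∂P :=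
          by simpa [Real.norm_eq_abs] using norm_integral_le_integral_norm (fun ω => max (W * R ω - a) 0 - max (W * R ω - b) 0)
      _ ≤ ∫ (_ : Ω), |a - b| ∂P := by
          apply integral_mono ((hInt a).sub (hInt b)).abs (integrable_const _)
          intro ω
          calc |max (W * R ω - a) 0 - max (W * R ω - b) 0|
              ≤ |(W * R ω - a) - (W * R ω - b)| := abs_max_sub_max_le_abs _ _ _
            _ = |a - b| := by rw [abs_sub_comm]; ring_nf
      _ = |a - b| := by simp
      _ ≤ 1 * dist a b := by rw [Real.dist_eq, one_mul]
  have hcont : Continuous Ψ := hLip.continuous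
  -- Ψ antitone
  have hanti : Antitone Ψ := by
    intro a b hab
    rw [hΨ a, hΨ b]
    apply integral_mono (hInt b) (hInt a)
    intro ω
    exact max_le_max (by linarith) le_rfl
  -- Ψ 0 > 0
  have hΨ0 : Ψ 0 = W * ∫ ω, R ω ∂P := by
    rw [hΨ 0, ← integral_const_mul]
    congr 1
    funext ω
    have : 0 ≤ W * R ω := mul_nonneg hW.le (hpos ω)
    rw [sub_zero, max_eq_left this]
  have hΨ0pos : 0 < Ψ 0 := by rw [hΨ0]; positivity
  set f : ℝ → ℝ := fun l => Ψ l - ζ * l with hf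
  have hfc : Continuous f := hcont.sub (continuous_const.mul continuous_id)
  set M : ℝ := Ψ 0 / ζ + 1 with hM
  have hMpos : 0 < M := by positivity
  have hfM : f M < 0 := by
    have h1 : Ψ M ≤ Ψ 0 := hanti hMpos.le
    have h2 : ζ * M = Ψ 0 + ζ := by rw [hM, mul_add, mul_one, mul_div_cancel₀ _ (ne_of_gt hζ)]
    simp only [hf]; linarith
  have hf0 : 0 < f 0 := by simp [hf, hΨ0pos]
  -- existence via IVT
  obtain ⟨l, hlmem, hfl⟩ : ∃ l ∈ Set.Icc (0:ℝ) M, f l = 0 := by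
    have := intermediate_value_Icc' hMpos.le hfc.continuousOn
      (Set.mem_Icc.mpr ⟨hfM.le, hf0.le⟩)
    obtain ⟨l, hl, hl'⟩ := this
    exact ⟨l, hl, hl'⟩
  have hlpos : 0 < l := by
    rcases lt_or_eq_of_le hlmem.1 with h | h
    · exact h
    · exfalso; rw [← h] at hfl; linarith
  have hlroot : Ψ l = ζ * l := by simp only [hf] at hfl; linarith
  -- probability positivity
  have hprob : ∀ l : ℝ, 0 < l → Ψ l = ζ * l → 0 < P {ω | l < W * R ω} := by
    intro l hl hroot
    rw [pos_iff_ne_zero]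
    intro hzero
    have hae : ∀ᵐ ω ∂P, W * R ω ≤ l := by
      rw [ae_iff]
      convert hzero using 2
      ext ω
      simp [not_le]
    have : Ψ l = 0 := by
      rw [hΨ l]
      apply integral_eq_zero_of_ae
      filter_upwards [hae] with ω hω
      show max (W * R ω - l) 0 = 0
      exact max_eq_right (by linarith)
    rw [hroot] at this
    nlinarith
  refine ⟨⟨l, ⟨hlpos, hlroot⟩, ?_⟩, hprob⟩
  rintro l' ⟨hl'pos, hl'root⟩
  -- uniqueness: Ψ antitone, ζ·l strictly increasing
  by_contra hne
  rcases lt_or_gt_of_ne hne with h | h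
  · have := hanti h.le
    rw [hl'root, hlroot] at this
    nlinarith
  · have := hanti h.le
    rw [hl'root, hlroot] at this
    nlinarith
end

section
/- Let R be a nonnegative integrable real-valued random variable on a probability space with E[R] > 0 and W > 0 a real constant, and define Ψ(λ) := E[(W·R − λ)^+]. For ζ > 0 let λ*(ζ) denote the unique positive solution of Ψ(λ) = ζ·λ. Then λ*(ζ) is strictly decreasing in ζ: if 0 < ζ_1 < ζ_2 then λ*(ζ_2) < λ*(ζ_1). -/
open MeasureTheory

/-- The unique positive solution `λ*(ζ)` of `Ψ(λ) = ζ·λ`, where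
`Ψ(λ) := E[(W·R − λ)⁺]` for a nonnegative integrable `R` with `E[R] > 0` and `W > 0`,
is strictly decreasing in `ζ`: if `0 < ζ₁ < ζ₂` then `λ*(ζ₂) < λ*(ζ₁)`. -/
theorem fixed_point_strict_anti_in_zeta {Ω : Type*} [MeasurableSpace Ω]
    (P : Measure Ω) [IsProbabilityMeasure P]
    (R : Ω → ℝ) (hmeas : Measurable R) (hint : Integrable R P) (hpos : ∀ ω, 0 ≤ R ω)
    (hER : 0 < ∫ ω, R ω ∂P)
    (W : ℝ) (hW : 0 < W)
    (Ψ : ℝ → ℝ) (hΨ : ∀ l, Ψ l = ∫ ω, max (W * R ω - l) 0 ∂P)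
    (ζ₁ ζ₂ l₁ l₂ : ℝ) (hζ₁ : 0 < ζ₁) (hζ₁₂ : ζ₁ < ζ₂)
    (hl₁ : 0 < l₁) (hl₂ : 0 < l₂)
    (hsol₁ : Ψ l₁ = ζ₁ * l₁) (hsol₂ : Ψ l₂ = ζ₂ * l₂) :
    l₂ < l₁ := by
  by_contra h
  push_neg at h
  -- h : l₁ ≤ l₂
  have hg : Integrable (fun ω => max (W * R ω - l₁) 0) P := by
    refine (hint.const_mul W).mono ?_ ?_
    · exact (((hmeas.const_mul W).sub measurable_const).max measurable_const).aestronglyMeasurable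
    · filter_upwards with ω
      have h0 : 0 ≤ W * R ω := mul_nonneg hW.le (hpos ω)
      rw [Real.norm_eq_abs, Real.norm_eq_abs, abs_of_nonneg (le_max_right _ _), abs_of_nonneg h0]
      exact max_le (by linarith) h0
  have hmono : Ψ l₂ ≤ Ψ l₁ := by
    rw [hΨ, hΨ]
    refine integral_mono_of_nonneg ?_ hg ?_
    · filter_upwards with ω using le_max_right _ _
    · filter_upwards with ω using max_le_max (by linarith) le_rfl
  rw [hsol₁, hsol₂] at hmono
  nlinarith
end

section
/- Let R be a nonnegative integrable real-valued random variable on a probability space with E[R] > 0 and W > 0 a real constant, and define Ψ(λ) := E[(W·R − λ)^+]. For τ ∈ [0,1), T_cot > 0, T_ecca > 0, p ∈ (0,1] and integer q ≥ 1, set ζ := (τ·T_cot + ((q+1)/(2p))·T_ecca) / ((1−τ)·T_cot) and let λ*(τ, T_cot, T_ecca, p, q) be the unique positive solution of Ψ(λ) = ζ·λ. Then λ* is strictly increasing in T_cot and in p, and strictly decreasing in τ, in T_ecca, and in q (for the other arguments fixed). -/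
open MeasureTheory

/-- `ζ(τ, T_cot, T_ecca, p, q) := (τ·T_cot + ((q+1)/(2p))·T_ecca) / ((1−τ)·T_cot)`. -/
noncomputable def zetaLBT (τ Tcot Tecca p : ℝ) (q : ℕ) : ℝ :=
  (τ * Tcot + (((q : ℝ) + 1) / (2 * p)) * Tecca) / ((1 - τ) * Tcot)

set_option maxHeartbeats 1600000

/-- The maximum throughput `λ*(τ, T_cot, T_ecca, p, q)`, i.e. the unique positive solution
of `Ψ(λ) = ζ·λ` with `Ψ(λ) := E[(W·R − λ)⁺]` and `ζ := ζ(τ, T_cot, T_ecca, p, q)`, is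
strictly increasing in `T_cot` and in `p`, and strictly decreasing in `τ`, in `T_ecca`,
and in `q` (the other arguments being fixed). -/
theorem throughput_monotone_in_parameters {Ω : Type*} [MeasurableSpace Ω]
    (P : Measure Ω) [IsProbabilityMeasure P]
    (R : Ω → ℝ) (hmeas : Measurable R) (hint : Integrable R P) (hpos : ∀ ω, 0 ≤ R ω)
    (hER : 0 < ∫ ω, R ω ∂P)
    (W : ℝ) (hW : 0 < W)
    (Ψ : ℝ → ℝ) (hΨ : ∀ l, Ψ l = ∫ ω, max (W * R ω - l) 0 ∂P)
    (τ Tcot Tecca p : ℝ) (q : ℕ)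
    (hτ0 : 0 ≤ τ) (hτ1 : τ < 1) (hT : 0 < Tcot) (hE : 0 < Tecca)
    (hp : 0 < p) (hp1 : p ≤ 1) (hq : 1 ≤ q) :
    -- strictly increasing in T_cot
    (∀ T₁ T₂ l₁ l₂, 0 < T₁ → T₁ < T₂ → 0 < l₁ → 0 < l₂ →
      Ψ l₁ = zetaLBT τ T₁ Tecca p q * l₁ → Ψ l₂ = zetaLBT τ T₂ Tecca p q * l₂ →
      l₁ < l₂) ∧
    -- strictly increasing in p
    (∀ p₁ p₂ l₁ l₂, 0 < p₁ → p₁ < p₂ → p₂ ≤ 1 → 0 < l₁ → 0 < l₂ →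
      Ψ l₁ = zetaLBT τ Tcot Tecca p₁ q * l₁ → Ψ l₂ = zetaLBT τ Tcot Tecca p₂ q * l₂ →
      l₁ < l₂) ∧
    -- strictly decreasing in τ
    (∀ τ₁ τ₂ l₁ l₂, 0 ≤ τ₁ → τ₁ < τ₂ → τ₂ < 1 → 0 < l₁ → 0 < l₂ →
      Ψ l₁ = zetaLBT τ₁ Tcot Tecca p q * l₁ → Ψ l₂ = zetaLBT τ₂ Tcot Tecca p q * l₂ →
      l₂ < l₁) ∧
    -- strictly decreasing in T_ecca
    (∀ E₁ E₂ l₁ l₂, 0 < E₁ → E₁ < E₂ → 0 < l₁ → 0 < l₂ →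
      Ψ l₁ = zetaLBT τ Tcot E₁ p q * l₁ → Ψ l₂ = zetaLBT τ Tcot E₂ p q * l₂ →
      l₂ < l₁) ∧
    -- strictly decreasing in q
    (∀ (q₁ q₂ : ℕ) (l₁ l₂ : ℝ), 1 ≤ q₁ → q₁ < q₂ → 0 < l₁ → 0 < l₂ →
      Ψ l₁ = zetaLBT τ Tcot Tecca p q₁ * l₁ → Ψ l₂ = zetaLBT τ Tcot Tecca p q₂ * l₂ →
      l₂ < l₁) := by
  have hInt : ∀ l : ℝ, Integrable (fun ω => max (W * R ω - l) 0) P := by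
    intro l
    exact ((hint.const_mul W).sub (integrable_const l)).pos_part
  have hanti : ∀ a b : ℝ, a ≤ b → Ψ b ≤ Ψ a := by
    intro a b hab
    rw [hΨ, hΨ]
    refine integral_mono (hInt b) (hInt a) ?_
    intro ω
    exact max_le_max (by linarith) le_rfl
  -- key comparison lemma
  have key : ∀ ζ₁ ζ₂ l₁ l₂ : ℝ, 0 ≤ ζ₁ → ζ₁ < ζ₂ → 0 < l₁ → 0 < l₂ →
      Ψ l₁ = ζ₁ * l₁ → Ψ l₂ = ζ₂ * l₂ → l₂ < l₁ := by
    intro ζ₁ ζ₂ l₁ l₂ hz0 hzz hl₁ hl₂ h₁ h₂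
    by_contra hcon
    push_neg at hcon
    have h3 : Ψ l₂ ≤ Ψ l₁ := hanti l₁ l₂ hcon
    rw [h₁, h₂] at h3
    nlinarith
  have hd : 0 < 1 - τ := by linarith
  have hzero_nonneg : ∀ (τ' T' E' p' : ℝ) (q' : ℕ), 0 ≤ τ' → τ' < 1 → 0 < T' → 0 < E' →
      0 < p' → 0 ≤ zetaLBT τ' T' E' p' q' := by
    intro τ' T' E' p' q' h1 h2 h3 h4 h5
    unfold zetaLBT
    apply div_nonneg
    · have : 0 ≤ ((q' : ℝ) + 1) / (2 * p') := by positivity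
      nlinarith
    · nlinarith
  refine ⟨?_, ?_, ?_, ?_, ?_⟩
  · -- T_cot increasing
    intro T₁ T₂ l₁ l₂ hT₁ hTT hl₁ hl₂ h₁ h₂
    refine key _ _ l₂ l₁ (hzero_nonneg τ T₂ Tecca p q hτ0 hτ1 (by linarith) hE hp) ?_ hl₂ hl₁ h₂ h₁
    unfold zetaLBT
    rw [div_lt_div_iff₀ (by nlinarith) (by nlinarith)]
    have hc : 0 < ((q : ℝ) + 1) / (2 * p) := by positivity
    nlinarith [mul_pos hc hE, mul_pos (mul_pos hc hE) (sub_pos.2 hTT)]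
  · -- p increasing
    intro p₁ p₂ l₁ l₂ hp₁ hpp hp₂1 hl₁ hl₂ h₁ h₂
    refine key _ _ l₂ l₁ (hzero_nonneg τ Tcot Tecca p₂ q hτ0 hτ1 hT hE (by linarith)) ?_ hl₂ hl₁ h₂ h₁
    unfold zetaLBT
    apply div_lt_div_of_pos_right ?_ (by nlinarith)
    have : ((q : ℝ) + 1) / (2 * p₂) < ((q : ℝ) + 1) / (2 * p₁) := by
      apply div_lt_div_of_pos_left (by positivity) (by nlinarith) (by nlinarith)
    nlinarith [this, hE]
  · -- τ decreasing
    intro τ₁ τ₂ l₁ l₂ hτ₁ hττ hτ₂1 hl₁ hl₂ h₁ h₂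
    refine key _ _ l₁ l₂ (hzero_nonneg τ₁ Tcot Tecca p q hτ₁ (by linarith) hT hE hp) ?_ hl₁ hl₂ h₁ h₂
    unfold zetaLBT
    rw [div_lt_div_iff₀ (by nlinarith) (by nlinarith)]
    have hc : 0 < ((q : ℝ) + 1) / (2 * p) := by positivity
    nlinarith [mul_pos hc hE, mul_pos hT hT, sub_pos.2 hττ, mul_pos (mul_pos hc hE) (mul_pos hT (sub_pos.2 hττ))]
  · -- T_ecca decreasing
    intro E₁ E₂ l₁ l₂ hE₁ hEE hl₁ hl₂ h₁ h₂
    refine key _ _ l₁ l₂ (hzero_nonneg τ Tcot E₁ p q hτ0 hτ1 hT (by linarith) hp) ?_ hl₁ hl₂ h₁ h₂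
    unfold zetaLBT
    apply div_lt_div_of_pos_right ?_ (by nlinarith)
    have hc : 0 < ((q : ℝ) + 1) / (2 * p) := by positivity
    linarith [mul_lt_mul_of_pos_left hEE hc]
  · -- q decreasing
    intro q₁ q₂ l₁ l₂ hq₁ hqq hl₁ hl₂ h₁ h₂
    refine key _ _ l₁ l₂ (hzero_nonneg τ Tcot Tecca p q₁ hτ0 hτ1 hT hE hp) ?_ hl₁ hl₂ h₁ h₂
    unfold zetaLBT
    have hcast : (q₁ : ℝ) < (q₂ : ℝ) := Nat.cast_lt.2 hqq
    have h2p : (0:ℝ) < 2 * p := by linarith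
    have hcc : ((q₁ : ℝ) + 1) / (2 * p) < ((q₂ : ℝ) + 1) / (2 * p) :=
      div_lt_div_of_pos_right (by linarith) h2p
    exact div_lt_div_of_pos_right
      (by linarith [mul_lt_mul_of_pos_right hcc hE]) (mul_pos hd hT)
end

section
/- Define ζ(τ, T_cot, T_ecca, p, q) := (τ·T_cot + ((q+1)/(2p))·T_ecca) / ((1−τ)·T_cot) for τ ∈ [0,1), T_cot > 0, T_ecca > 0, p ∈ (0,1], and integer q ≥ 1. Over the feasible set of pairs (q, T_cot) with q an integer satisfying 4 ≤ q ≤ 32 and 0 < T_cot < (13/32)·q, one has ζ(τ, T_cot, T_ecca, p, q) > (τ + (16/(13p))·T_ecca·(33/32)) / (1 − τ) for every feasible pair, and the infimum of ζ over the feasible set equals (τ + (16/(13p))·T_ecca·(33/32)) / (1 − τ), approached as q = 32 and T_cot → 13. -/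
open Filter

/-- Over the regulation-feasible set `{(q, T_cot) : 4 ≤ q ≤ 32, 0 < T_cot < (13/32)·q}`,
`ζ` is strictly larger than `(τ + (16/(13p))·T_ecca·(33/32)) / (1 − τ)`, this value is the
infimum of `ζ` over the feasible set, and it is approached as `q = 32` and `T_cot → 13`. -/
theorem zetaLBT_infimum_over_feasible (τ Tecca p : ℝ)
    (hτ0 : 0 ≤ τ) (hτ1 : τ < 1) (hE : 0 < Tecca) (hp : 0 < p) (hp1 : p ≤ 1) :
    (∀ (q : ℕ) (T : ℝ), 4 ≤ q → q ≤ 32 → 0 < T → T < (13 / 32) * (q : ℝ) →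
      (τ + (16 / (13 * p)) * Tecca * (33 / 32)) / (1 - τ) < zetaLBT τ T Tecca p q) ∧
    IsGLB {x : ℝ | ∃ (q : ℕ) (T : ℝ), 4 ≤ q ∧ q ≤ 32 ∧ 0 < T ∧ T < (13 / 32) * (q : ℝ) ∧
        x = zetaLBT τ T Tecca p q}
      ((τ + (16 / (13 * p)) * Tecca * (33 / 32)) / (1 - τ)) ∧
    Tendsto (fun T : ℝ => zetaLBT τ T Tecca p 32) (nhdsWithin 13 (Set.Iio 13))
      (nhds ((τ + (16 / (13 * p)) * Tecca * (33 / 32)) / (1 - τ))) := by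
  have h1τ : 0 < 1 - τ := by linarith
  have hp' : p ≠ 0 := ne_of_gt hp
  -- strict bound at every feasible point
  have key : ∀ (q : ℕ) (T : ℝ), 4 ≤ q → q ≤ 32 → 0 < T → T < (13 / 32) * (q : ℝ) →
      (τ + (16 / (13 * p)) * Tecca * (33 / 32)) / (1 - τ) < zetaLBT τ T Tecca p q := by
    intro q T hq4 hq32 hT0 hTlt
    have hq32' : (q : ℝ) ≤ 32 := by exact_mod_cast hq32
    have hq4' : (4 : ℝ) ≤ (q : ℝ) := by exact_mod_cast hq4
    have hT13 : 33 * T < 13 * ((q : ℝ) + 1) := by nlinarith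
    have h : (16 / (13 * p)) * Tecca * (33 / 32) * T < (((q : ℝ) + 1) / (2 * p)) * Tecca := by
      rw [show (16 / (13 * p)) * Tecca * (33 / 32) * T = (33 * Tecca * T) / (26 * p) by
            field_simp; ring,
          show (((q : ℝ) + 1) / (2 * p)) * Tecca = (13 * ((q : ℝ) + 1) * Tecca) / (26 * p) by
            field_simp; ring]
      rw [div_lt_div_iff₀ (by positivity) (by positivity)]
      nlinarith [mul_lt_mul_of_pos_left hT13 (mul_pos hE hp)]
    rw [zetaLBT, div_lt_div_iff₀ h1τ (by positivity)]
    nlinarith [mul_lt_mul_of_pos_left h h1τ]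
  -- the value and continuity at q = 32, T = 13
  have hval : zetaLBT τ 13 Tecca p 32 =
      (τ + (16 / (13 * p)) * Tecca * (33 / 32)) / (1 - τ) := by
    unfold zetaLBT
    rw [div_eq_div_iff (by positivity) (ne_of_gt h1τ)]
    field_simp
    ring
  have hcont : Tendsto (fun T : ℝ => zetaLBT τ T Tecca p 32) (nhds 13)
      (nhds (zetaLBT τ 13 Tecca p 32)) := by
    have : ContinuousAt (fun T : ℝ => zetaLBT τ T Tecca p 32) 13 := by
      unfold zetaLBT
      exact ContinuousAt.div (by fun_prop) (by fun_prop) (by positivity)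
    exact this
  have htend : Tendsto (fun T : ℝ => zetaLBT τ T Tecca p 32) (nhdsWithin 13 (Set.Iio 13))
      (nhds ((τ + (16 / (13 * p)) * Tecca * (33 / 32)) / (1 - τ))) := by
    rw [← hval]
    exact hcont.mono_left nhdsWithin_le_nhds
  refine ⟨key, ⟨?_, ?_⟩, htend⟩
  · rintro x ⟨q, T, hq4, hq32, hT0, hTlt, rfl⟩
    exact (key q T hq4 hq32 hT0 hTlt).le
  · intro b hb
    refine ge_of_tendsto htend ?_
    have h1 : ∀ᶠ T : ℝ in nhdsWithin 13 (Set.Iio 13), T ∈ Set.Iio (13 : ℝ) :=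
      self_mem_nhdsWithin
    have h2 : ∀ᶠ T : ℝ in nhdsWithin 13 (Set.Iio 13), (0 : ℝ) < T :=
      (eventually_gt_nhds (by norm_num : (0 : ℝ) < 13)).filter_mono nhdsWithin_le_nhds
    filter_upwards [h1, h2] with T hT13 hT0
    exact hb ⟨32, T, by norm_num, le_refl _, hT0, by norm_num [Set.mem_Iio] at hT13 ⊢; linarith, rfl⟩
end

section
/- Let R be a nonnegative integrable real-valued random variable on a probability space with E[R] > 0, let W > 0, τ ∈ [0,1), T_cot > 0, T_ecca > 0, p ∈ (0,1] and integer q ≥ 1, set ζ := (τ·T_cot + ((q+1)/(2p))·T_ecca) / ((1−τ)·T_cot), and let λ* be the unique positive solution of E[(W·R − λ)^+] = ζ·λ. For every real t ≥ 0 with P(R ≥ t) > 0, define the throughput of the threshold-t policy as Λ(t) := ((1−τ)·T_cot·W·E[R·1{R ≥ t}]) / ((1−τ)·T_cot·P(R ≥ t) + τ·T_cot + ((q+1)/(2p))·T_ecca). Then Λ(t) ≤ λ* for every such t, P(R ≥ λ*/W) > 0, and Λ(λ*/W) = λ*; in particular, the supremum of Λ(t) over all thresholds t ≥ 0 with P(R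 ≥ t) > 0 equals λ* and is attained at t = λ*/W. -/
open MeasureTheory

/-!
Write `a = (1 - τ) T_cot` and `c = τ T_cot + ((q+1)/(2p)) T_ecca`, so `ζ = c / a` and
`Λ(t) = a W E[R 1{R ≥ t}] / (a P(R ≥ t) + c)`. Clearing the denominator (Dinkelbach's trick),
`Λ(t) ≤ λ*` is equivalent to `E[(W R − λ*) 1{R ≥ t}] ≤ ζ λ*`, and the left side is at most
`E[(W R − λ*)⁺] = ζ λ*`, with equality exactly when the indicator selects `{W R ≥ λ*}`, i.e. at
`t = λ*/W`. Since `ζ λ* > 0`, that event cannot be null.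
-/

lemma mul_div_add_le_iff {a c N D l : ℝ} (ha : 0 < a) (hden : 0 < a * D + c) :
    a * N / (a * D + c) ≤ l ↔ N - l * D ≤ c / a * l := by
  rw [div_le_iff₀ hden, div_mul_eq_mul_div, le_div_iff₀ ha]
  constructor <;> intro h <;> linarith

lemma mul_div_add_eq_iff {a c N D l : ℝ} (ha : 0 < a) (hden : 0 < a * D + c) :
    a * N / (a * D + c) = l ↔ N - l * D = c / a * l := by
  rw [div_eq_iff hden.ne', div_mul_eq_mul_div, eq_div_iff ha.ne']
  constructor <;> intro h <;> linarith

section SetIntegral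

variable {α : Type*} [MeasurableSpace α] {μ : Measure α}

lemma setIntegral_le_integral_max_zero {g : α → ℝ} (hg : Integrable g μ) (s : Set α) :
    ∫ x in s, g x ∂μ ≤ ∫ x, max (g x) 0 ∂μ :=
  calc ∫ x in s, g x ∂μ ≤ ∫ x in s, max (g x) 0 ∂μ :=
        setIntegral_mono hg.integrableOn hg.pos_part.integrableOn fun _ => le_max_left _ _
    _ ≤ ∫ x, max (g x) 0 ∂μ :=
        setIntegral_le_integral hg.pos_part (ae_of_all _ fun _ => le_max_right _ _)

lemma setIntegral_nonneg_eq_integral_max_zero {g : α → ℝ}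
    (hs : MeasurableSet {x | 0 ≤ g x}) :
    ∫ x in {x | 0 ≤ g x}, g x ∂μ = ∫ x, max (g x) 0 ∂μ := by
  rw [← setIntegral_eq_integral_of_forall_compl_eq_zero fun x hx =>
    max_eq_right (not_le.mp hx).le]
  exact setIntegral_congr_fun hs fun x hx => (max_eq_left hx).symm

lemma setIntegral_mul_sub_const [IsFiniteMeasure μ] {R : α → ℝ} (hR : Integrable R μ)
    (s : Set α) (W l : ℝ) :
    ∫ x in s, (W * R x - l) ∂μ = W * ∫ x in s, R x ∂μ - l * μ.real s := by
  rw [integral_sub (hR.const_mul W).integrableOn (integrable_const l).integrableOn,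
    integral_const_mul, setIntegral_const, smul_eq_mul, mul_comm (μ.real s)]

end SetIntegral

theorem threshold_policy_optimal_general {Ω : Type*} [MeasurableSpace Ω]
    (P : Measure Ω) [IsProbabilityMeasure P]
    (R : Ω → ℝ) (hmeas : Measurable R) (hint : Integrable R P)
    (W τ Tcot Tecca p : ℝ) (q : ℕ)
    (hW : 0 < W) (hτ0 : 0 ≤ τ) (hτ1 : τ < 1) (hT : 0 < Tcot) (hE : 0 < Tecca)
    (hp : 0 < p)
    (ζ : ℝ) (hζ : ζ = (τ * Tcot + (((q : ℝ) + 1) / (2 * p)) * Tecca) / ((1 - τ) * Tcot))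
    (lstar : ℝ) (hlstar : 0 < lstar)
    (hsol : ∫ ω, max (W * R ω - lstar) 0 ∂P = ζ * lstar)
    (Λ : ℝ → ℝ)
    (hΛ : ∀ t, Λ t = ((1 - τ) * Tcot * W * ∫ ω, Set.indicator {ω' | t ≤ R ω'} R ω ∂P) /
      ((1 - τ) * Tcot * (P {ω | t ≤ R ω}).toReal
        + τ * Tcot + (((q : ℝ) + 1) / (2 * p)) * Tecca)) :
    (∀ t : ℝ, 0 ≤ t → 0 < P {ω | t ≤ R ω} → Λ t ≤ lstar) ∧
    0 < P {ω | lstar / W ≤ R ω} ∧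
    Λ (lstar / W) = lstar ∧
    IsGreatest {y : ℝ | ∃ t : ℝ, 0 ≤ t ∧ 0 < P {ω | t ≤ R ω} ∧ y = Λ t} lstar := by
  set a := (1 - τ) * Tcot
  set c := τ * Tcot + (((q : ℝ) + 1) / (2 * p)) * Tecca
  have ha : 0 < a := mul_pos (by linarith) hT
  have hc : 0 < c := by positivity
  have hmeas_Ici (t : ℝ) : MeasurableSet {ω | t ≤ R ω} := hmeas measurableSet_Ici
  have hden (t : ℝ) : 0 < a * P.real {ω | t ≤ R ω} + c := by positivity
  have hΛ' (t : ℝ) : Λ t = a * (W * ∫ ω in {ω | t ≤ R ω}, R ω ∂P) /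
      (a * P.real {ω | t ≤ R ω} + c) := by
    rw [hΛ, ← integral_indicator (hmeas_Ici t), mul_assoc, add_assoc, measureReal_def]
  have hgap (t : ℝ) :
      W * ∫ ω in {ω | t ≤ R ω}, R ω ∂P - lstar * P.real {ω | t ≤ R ω} ≤ ζ * lstar := by
    rw [← setIntegral_mul_sub_const hint, ← hsol]
    exact setIntegral_le_integral_max_zero ((hint.const_mul W).sub (integrable_const _)) _
  have hopt_set : {ω | lstar / W ≤ R ω} = {ω | 0 ≤ W * R ω - lstar} := by
    ext ω
    simp only [Set.mem_ofPred_eq, div_le_iff₀' hW, sub_nonneg]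
  have hgap_opt : ∫ ω in {ω | lstar / W ≤ R ω}, (W * R ω - lstar) ∂P = ζ * lstar := by
    rw [← hsol, hopt_set]
    exact setIntegral_nonneg_eq_integral_max_zero (hopt_set ▸ hmeas_Ici _)
  have hbound (t : ℝ) : Λ t ≤ lstar := by
    rw [hΛ', mul_div_add_le_iff ha (hden t), ← hζ]
    exact hgap t
  have hattain : Λ (lstar / W) = lstar := by
    rw [hΛ', mul_div_add_eq_iff ha (hden _), ← hζ, ← setIntegral_mul_sub_const hint]
    exact hgap_opt
  have hpos : 0 < P {ω | lstar / W ≤ R ω} := by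
    refine pos_iff_ne_zero.mpr fun hnull => ?_
    have hζpos : 0 < ζ * lstar := mul_pos (hζ ▸ div_pos hc ha) hlstar
    rw [← hgap_opt, setIntegral_measure_zero _ hnull] at hζpos
    exact lt_irrefl 0 hζpos
  exact ⟨fun t _ _ => hbound t, hpos, hattain,
    ⟨lstar / W, by positivity, hpos, hattain.symm⟩, fun _ ⟨t, _, _, hy⟩ => hy ▸ hbound t⟩

/-- Optimality of the pure threshold policy with threshold `λ*/W`: if `λ*` is the (unique)
positive solution of `E[(W·R − λ)⁺] = ζ·λ` with
`ζ := (τ·T_cot + ((q+1)/(2p))·T_ecca) / ((1−τ)·T_cot)`, and the throughput of the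
threshold-`t` policy is
`Λ(t) := ((1−τ)·T_cot·W·E[R·1{R ≥ t}]) / ((1−τ)·T_cot·P(R ≥ t) + τ·T_cot + ((q+1)/(2p))·T_ecca)`,
then `Λ(t) ≤ λ*` for every threshold `t ≥ 0` with `P(R ≥ t) > 0`, the threshold `λ*/W`
satisfies `P(R ≥ λ*/W) > 0` and `Λ(λ*/W) = λ*`; in particular, `λ*` is the maximum of
`Λ` over all such thresholds. -/
theorem threshold_policy_optimal {Ω : Type*} [MeasurableSpace Ω]
    (P : Measure Ω) [IsProbabilityMeasure P]
    (R : Ω → ℝ) (hmeas : Measurable R) (hint : Integrable R P) (hpos : ∀ ω, 0 ≤ R ω)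
    (hER : 0 < ∫ ω, R ω ∂P)
    (W τ Tcot Tecca p : ℝ) (q : ℕ)
    (hW : 0 < W) (hτ0 : 0 ≤ τ) (hτ1 : τ < 1) (hT : 0 < Tcot) (hE : 0 < Tecca)
    (hp : 0 < p) (hp1 : p ≤ 1) (hq : 1 ≤ q)
    (ζ : ℝ) (hζ : ζ = (τ * Tcot + (((q : ℝ) + 1) / (2 * p)) * Tecca) / ((1 - τ) * Tcot))
    (lstar : ℝ) (hlstar : 0 < lstar)
    (hsol : ∫ ω, max (W * R ω - lstar) 0 ∂P = ζ * lstar)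
    (Λ : ℝ → ℝ)
    (hΛ : ∀ t, Λ t = ((1 - τ) * Tcot * W * ∫ ω, Set.indicator {ω' | t ≤ R ω'} R ω ∂P) /
      ((1 - τ) * Tcot * (P {ω | t ≤ R ω}).toReal
        + τ * Tcot + (((q : ℝ) + 1) / (2 * p)) * Tecca)) :
    (∀ t : ℝ, 0 ≤ t → 0 < P {ω | t ≤ R ω} → Λ t ≤ lstar) ∧
    0 < P {ω | lstar / W ≤ R ω} ∧
    Λ (lstar / W) = lstar ∧
    IsGreatest {y : ℝ | ∃ t : ℝ, 0 ≤ t ∧ 0 < P {ω | t ≤ R ω} ∧ y = Λ t} lstar :=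
  threshold_policy_optimal_general P R hmeas hint W τ Tcot Tecca p q hW hτ0 hτ1 hT hE hp ζ hζ lstar
    hlstar hsol Λ hΛ
end

section
/- Let R be a nonnegative integrable real-valued random variable on a probability space with E[R] > 0, let W > 0 and ζ > 0 be real constants, define Ψ(λ) := E[(W·R − λ)^+] and g(x) := E[W·R·1{W·R ≥ x}] / (P(W·R ≥ x) + ζ) for x ≥ 0, and let λ* be the unique positive solution of Ψ(λ) = ζ·λ. Then: (i) g(x) ≤ λ* for every x ≥ 0; (ii) x ≤ g(x) for every x ∈ [0, λ*]. Consequently, for any starting point λ_0 ∈ [0, λ*], the iteration λ_{t+1} = g(λ_t) produces a nondecreasing sequence bounded above by λ*, which therefore converges to a limit in [λ_0, λ*]. -/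
open MeasureTheory Filter Set

/-!
Write `X = W·R`, `p(x) = P(X ≥ x)` and `A(x) = E[X·1{X ≥ x}]`, so that `g(x) = A(x) / (p(x) + ζ)`.
Splitting `X = (X − c) + c` on `{X ≥ x}` and bounding `X − c ≤ (X − c)⁺` gives
`A(x) ≤ Ψ(c) + p(x)·c` for every `c`, with equality for `c = x`.
Taking `c = λ*` and using `Ψ(λ*) = ζλ*` yields `A(x) ≤ λ*(p(x) + ζ)`, i.e. `g ≤ λ*`;
taking `c = x ≤ λ*` and using that `Ψ` is antitone yields `A(x) ≥ ζλ* + p(x)·x ≥ x(p(x) + ζ)`,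
i.e. `x ≤ g(x)`. The iteration is then a monotone sequence bounded by `λ*`.
-/

namespace FixedPointIteration

variable {Ω : Type*} [MeasurableSpace Ω] {μ : Measure Ω} {X : Ω → ℝ}

lemma setIntegral_sub_eq_integral_max_sub (hXm : Measurable X) (c : ℝ) :
    ∫ ω in {ω | c ≤ X ω}, (X ω - c) ∂μ = ∫ ω, max (X ω - c) 0 ∂μ := by
  rw [← integral_indicator (measurableSet_le measurable_const hXm)]
  congr 1
  ext ω
  by_cases h : c ≤ X ω
  · simp [h]
  · simp [h, (lt_of_not_ge h).le]

variable [IsFiniteMeasure μ]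

lemma setIntegral_eq_setIntegral_sub_add (hX : Integrable X μ) (S : Set Ω) (c : ℝ) :
    ∫ ω in S, X ω ∂μ = ∫ ω in S, (X ω - c) ∂μ + μ.real S * c := by
  rw [integral_sub hX.integrableOn (integrable_const c).integrableOn, setIntegral_const,
    smul_eq_mul]
  ring

lemma setIntegral_sub_le_integral_max_sub (hX : Integrable X μ) (S : Set Ω) (c : ℝ) :
    ∫ ω in S, (X ω - c) ∂μ ≤ ∫ ω, max (X ω - c) 0 ∂μ := by
  have hpos : Integrable (fun ω => max (X ω - c) 0) μ := (hX.sub (integrable_const c)).pos_part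
  calc ∫ ω in S, (X ω - c) ∂μ ≤ ∫ ω in S, max (X ω - c) 0 ∂μ :=
        setIntegral_mono (hX.sub (integrable_const c)).integrableOn hpos.integrableOn
          fun _ => le_max_left _ _
    _ ≤ ∫ ω, max (X ω - c) 0 ∂μ :=
        setIntegral_le_integral hpos (Eventually.of_forall fun _ => le_max_right _ _)

lemma integral_max_sub_antitone (hX : Integrable X μ) :
    Antitone fun c => ∫ ω, max (X ω - c) 0 ∂μ := fun _ _ hcd =>
  integral_mono (hX.sub (integrable_const _)).pos_part (hX.sub (integrable_const _)).pos_part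
    fun _ => max_le_max (sub_le_sub_left hcd _) le_rfl

variable {ζ l : ℝ}

lemma setIntegral_div_le (hX : Integrable X μ) (hζ : 0 < ζ)
    (hl : ∫ ω, max (X ω - l) 0 ∂μ = ζ * l) (x : ℝ) :
    (∫ ω in {ω | x ≤ X ω}, X ω ∂μ) / (μ.real {ω | x ≤ X ω} + ζ) ≤ l := by
  have hA := setIntegral_eq_setIntegral_sub_add hX {ω | x ≤ X ω} l
  have hsub := setIntegral_sub_le_integral_max_sub hX {ω | x ≤ X ω} l
  rw [div_le_iff₀ (by positivity)]
  linarith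

lemma le_setIntegral_div (hX : Integrable X μ) (hXm : Measurable X) (hζ : 0 < ζ)
    (hl : ∫ ω, max (X ω - l) 0 ∂μ = ζ * l) {x : ℝ} (hxl : x ≤ l) :
    x ≤ (∫ ω in {ω | x ≤ X ω}, X ω ∂μ) / (μ.real {ω | x ≤ X ω} + ζ) := by
  have hA := setIntegral_eq_setIntegral_sub_add hX {ω | x ≤ X ω} x
  rw [setIntegral_sub_eq_integral_max_sub hXm] at hA
  have hΨ := integral_max_sub_antitone hX hxl
  have hζx : ζ * x ≤ ζ * l := mul_le_mul_of_nonneg_left hxl hζ.le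
  rw [le_div_iff₀ (by positivity)]
  linarith


variable {α : Type*} {g : α → α} {b : α} {seq : ℕ → α}

lemma le_of_recursion [Preorder α] (hgb : ∀ x ≤ b, g x ≤ b) (h0 : seq 0 ≤ b)
    (hrec : ∀ n, seq (n + 1) = g (seq n)) (n : ℕ) : seq n ≤ b := by
  induction n with
  | zero => exact h0
  | succ n ih => exact hrec n ▸ hgb _ ih

lemma monotone_tendsto_of_recursion [ConditionallyCompleteLinearOrder α] [TopologicalSpace α]
    [OrderTopology α] (hup : ∀ x ≤ b, x ≤ g x) (hgb : ∀ x ≤ b, g x ≤ b)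
    (h0 : seq 0 ≤ b) (hrec : ∀ n, seq (n + 1) = g (seq n)) :
    Monotone seq ∧ (∀ n, seq n ≤ b) ∧
      ∃ L, seq 0 ≤ L ∧ L ≤ b ∧ Tendsto seq atTop (nhds L) := by
  have hb := le_of_recursion hgb h0 hrec
  have hmono : Monotone seq := monotone_nat_of_le_succ fun n => hrec n ▸ hup _ (hb n)
  have hL := tendsto_atTop_ciSup hmono ⟨b, forall_mem_range.2 hb⟩
  exact ⟨hmono, hb, _, hmono.ge_of_tendsto hL 0, le_of_tendsto' hL hb, hL⟩

end FixedPointIteration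

open FixedPointIteration

theorem fixed_point_iteration_converges_general {Ω : Type*} [MeasurableSpace Ω]
    (P : Measure Ω) [IsProbabilityMeasure P]
    (R : Ω → ℝ) (hmeas : Measurable R) (hint : Integrable R P)
    (W ζ : ℝ) (hζ : 0 < ζ)
    (Ψ : ℝ → ℝ) (hΨ : ∀ l, Ψ l = ∫ ω, max (W * R ω - l) 0 ∂P)
    (g : ℝ → ℝ)
    (hg : ∀ x, g x = (∫ ω, Set.indicator {ω' | x ≤ W * R ω'} (fun ω' => W * R ω') ω ∂P) /
      ((P {ω | x ≤ W * R ω}).toReal + ζ))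
    (lstar : ℝ) (hsol : Ψ lstar = ζ * lstar) :
    (∀ x : ℝ, 0 ≤ x → g x ≤ lstar) ∧
    (∀ x : ℝ, 0 ≤ x → x ≤ lstar → x ≤ g x) ∧
    (∀ seq : ℕ → ℝ, 0 ≤ seq 0 → seq 0 ≤ lstar → (∀ n, seq (n + 1) = g (seq n)) →
      Monotone seq ∧ (∀ n, seq n ≤ lstar) ∧
        ∃ L : ℝ, seq 0 ≤ L ∧ L ≤ lstar ∧ Tendsto seq atTop (nhds L)) := by
  have hXm : Measurable fun ω => W * R ω := hmeas.const_mul W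
  have hX : Integrable (fun ω => W * R ω) P := hint.const_mul W
  have hg' : ∀ x, g x = (∫ ω in {ω | x ≤ W * R ω}, W * R ω ∂P) /
      (P.real {ω | x ≤ W * R ω} + ζ) := fun x => by
    rw [hg, integral_indicator (measurableSet_le measurable_const hXm), measureReal_def]
  have hl : ∫ ω, max (W * R ω - lstar) 0 ∂P = ζ * lstar := hΨ lstar ▸ hsol
  have hgl : ∀ x, g x ≤ lstar := fun x => hg' x ▸ setIntegral_div_le hX hζ hl x
  have hup : ∀ x ≤ lstar, x ≤ g x := fun x hx => hg' x ▸ le_setIntegral_div hX hXm hζ hl hx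
  exact ⟨fun x _ => hgl x, fun x _ => hup x, fun seq _ h0 hrec =>
    monotone_tendsto_of_recursion hup (fun x _ => hgl x) h0 hrec⟩

/-- Convergence of the fixed-point iteration for the maximum throughput: with
`Ψ(λ) := E[(W·R − λ)⁺]`, `g(x) := E[W·R·1{W·R ≥ x}] / (P(W·R ≥ x) + ζ)` and `λ*` the
unique positive solution of `Ψ(λ) = ζ·λ`, one has (i) `g(x) ≤ λ*` for every `x ≥ 0`,
(ii) `x ≤ g(x)` for every `x ∈ [0, λ*]`; consequently, any iteration sequence
`λ_{t+1} = g(λ_t)` started at `λ₀ ∈ [0, λ*]` is nondecreasing, bounded above by `λ*`,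
and converges to a limit in `[λ₀, λ*]`. -/
theorem fixed_point_iteration_converges {Ω : Type*} [MeasurableSpace Ω]
    (P : Measure Ω) [IsProbabilityMeasure P]
    (R : Ω → ℝ) (hmeas : Measurable R) (hint : Integrable R P) (hpos : ∀ ω, 0 ≤ R ω)
    (hER : 0 < ∫ ω, R ω ∂P)
    (W ζ : ℝ) (hW : 0 < W) (hζ : 0 < ζ)
    (Ψ : ℝ → ℝ) (hΨ : ∀ l, Ψ l = ∫ ω, max (W * R ω - l) 0 ∂P)
    (g : ℝ → ℝ)
    (hg : ∀ x, g x = (∫ ω, Set.indicator {ω' | x ≤ W * R ω'} (fun ω' => W * R ω') ω ∂P) /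
      ((P {ω | x ≤ W * R ω}).toReal + ζ))
    (lstar : ℝ) (hlstar : 0 < lstar) (hsol : Ψ lstar = ζ * lstar) :
    (∀ x : ℝ, 0 ≤ x → g x ≤ lstar) ∧
    (∀ x : ℝ, 0 ≤ x → x ≤ lstar → x ≤ g x) ∧
    (∀ seq : ℕ → ℝ, 0 ≤ seq 0 → seq 0 ≤ lstar → (∀ n, seq (n + 1) = g (seq n)) →
      Monotone seq ∧ (∀ n, seq n ≤ lstar) ∧
        ∃ L : ℝ, seq 0 ≤ L ∧ L ≤ lstar ∧ Tendsto seq atTop (nhds L)) :=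
  fixed_point_iteration_converges_general P R hmeas hint W ζ hζ Ψ hΨ g hg lstar hsol
end
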